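/- arXiv:1609.08954 — 11 statements merged into one kernel-verified Lean document; each statement's English description precedes it below -/
import Mathlib

section
/- Let p, q, k ∈ V with λ k < λ p ≤ λ q. Then the equivariant structure constant c p q k equals 0. (Paper's Lemma: c_{pq}^k = 0 whenever λ(k) < λ(p) ≤ λ(q).) -/
theorem structure_constant_vanishes_below
    {R : Type*} [CommRing R] [IsDomain R]
    {V : Type*} [Fintype V]
    (lam : V → ℕ) (α : V → V → R)
    (hdiag : ∀ p : V, α p p ≠ 0)
    (hvan : ∀ p q : V, q ≠ p → lam q ≤ lam p → α p q = 0)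
    (c : V → V → V → R)
    (hc : ∀ p q s : V, α p s * α q s = ∑ r : V, c p q r * α r s)
    (p q k : V) (hkp : lam k < lam p) (hpq : lam p ≤ lam q) :
    c p q k = 0 := by
  suffices h : ∀ n : ℕ, ∀ k : V, lam k = n → lam k < lam p → c p q k = 0 from
    h _ k rfl hkp
  intro n
  induction n using Nat.strong_induction_on with
  | _ n ih =>
    intro k hkn hklt
    have hpk : α p k = 0 :=
      hvan p k (fun h => by rw [h] at hklt; omega) hklt.le
    have key := hc p q k
    rw [hpk, zero_mul] at key
    have hsum : ∑ r : V, c p q r * α r k = c p q k * α k k := by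
      refine Finset.sum_eq_single_of_mem k (Finset.mem_univ k) (fun r _ hr => ?_)
      rcases lt_or_ge (lam r) (lam k) with h | h
      · rw [ih (lam r) (by omega) r rfl (by omega), zero_mul]
      · rw [hvan r k (Ne.symm hr) h, mul_zero]
    rw [hsum] at key
    rcases mul_eq_zero.mp key.symm with h | h
    · exact h
    · exact absurd h (hdiag k)
end

section
/- Let p, q ∈ V with p ≠ q and λ p ≤ λ q. Then c p q p = 0. (Paper's Lemma: c_{pq}^p = 0 for λ(p) ≤ λ(q).) -/
theorem structure_constant_vanishes_at_p
    {R : Type*} [CommRing R] [IsDomain R]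
    {V : Type*} [Fintype V]
    (lam : V → ℕ) (α : V → V → R)
    (hdiag : ∀ p : V, α p p ≠ 0)
    (hvan : ∀ p q : V, q ≠ p → lam q ≤ lam p → α p q = 0)
    (c : V → V → V → R)
    (hc : ∀ p q s : V, α p s * α q s = ∑ r : V, c p q r * α r s)
    (p q : V) (hne : p ≠ q) (hpq : lam p ≤ lam q) :
    c p q p = 0 := by
  suffices h : ∀ n : ℕ, ∀ s : V, lam s = n → lam s ≤ lam p → c p q s = 0 by
    exact h (lam p) p rfl le_rfl
  intro n
  induction n using Nat.strong_induction_on with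
  | _ n ih =>
    intro s hsn hsp
    -- LHS of the relation at s vanishes
    have hlhs : α p s * α q s = 0 := by
      by_cases hsq : s = q
      · subst hsq
        rw [hvan p s (Ne.symm hne) hsp, zero_mul]
      · have : α q s = 0 := hvan q s hsq (le_trans hsp hpq)
        rw [this, mul_zero]
    have hsum : (∑ r : V, c p q r * α r s) = 0 := by rw [← hc]; exact hlhs
    have hsingle : (∑ r : V, c p q r * α r s) = c p q s * α s s := by
      apply Finset.sum_eq_single
      · intro r _ hrs
        by_cases hval : lam s ≤ lam r
        · rw [hvan r s (Ne.symm hrs) hval, mul_zero]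
        · push_neg at hval
          have : c p q r = 0 :=
            ih (lam r) (hsn ▸ hval) r rfl (le_trans (le_of_lt hval) hsp)
          rw [this, zero_mul]
      · intro h; exact absurd (Finset.mem_univ s) h
    have : c p q s * α s s = 0 := by rw [← hsingle]; exact hsum
    rcases mul_eq_zero.mp this with h | h
    · exact h
    · exact absurd h (hdiag s)
end

section
/- Let p, q ∈ V with λ p ≤ λ q, and let k ∈ V with k ≠ p, k ≠ q and λ p ≤ λ k ≤ λ q. Then c p q k = 0. (Paper's Lemma: c_{pq}^k = 0 for k ∈ M^T \ {p,q} with λ(p) ≤ λ(k) ≤ λ(q).) -/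
theorem structure_constant_vanishes_between
    {R : Type*} [CommRing R] [IsDomain R]
    {V : Type*} [Fintype V]
    (lam : V → ℕ) (α : V → V → R)
    (hdiag : ∀ p : V, α p p ≠ 0)
    (hvan : ∀ p q : V, q ≠ p → lam q ≤ lam p → α p q = 0)
    (c : V → V → V → R)
    (hc : ∀ p q s : V, α p s * α q s = ∑ r : V, c p q r * α r s)
    (p q k : V) (hpq : lam p ≤ lam q)
    (hkp : k ≠ p) (hkq : k ≠ q)
    (hpk : lam p ≤ lam k) (hkq' : lam k ≤ lam q) :
    c p q k = 0 := by
  have key : ∀ n : ℕ, ∀ s : V, lam s = n → s ≠ q → lam s ≤ lam q → c p q s = 0 := by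
    intro n
    induction n using Nat.strong_induction_on with
    | _ n ih =>
      intro s hsn hsq hsl
      have h0 := hc p q s
      rw [hvan q s hsq hsl, mul_zero] at h0
      have hsum : ∑ r : V, c p q r * α r s = c p q s * α s s := by
        refine Finset.sum_eq_single s ?_ ?_
        · intro r _ hr
          by_cases hrl : lam s ≤ lam r
          · rw [hvan r s (Ne.symm hr), mul_zero]
            exact hrl
          · push_neg at hrl
            have hrq : r ≠ q := by
              rintro rfl
              exact absurd (lt_of_lt_of_le hrl hsl) (lt_irrefl _)
            rw [ih (lam r) (hsn ▸ hrl) r rfl hrq (le_trans hrl.le hsl), zero_mul]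
        · intro h
          exact absurd (Finset.mem_univ s) h
      rw [hsum] at h0
      rcases mul_eq_zero.mp h0.symm with h | h
      · exact h
      · exact absurd h (hdiag s)
  exact key (lam k) k rfl hkq hkq'
end

section
/- Let p, q ∈ V with λ p ≤ λ q. Then c p q q = α p q. (Paper's Lemma: c_{pq}^q = α_p(q) for λ(p) ≤ λ(q).) -/
theorem structure_constant_at_q
    {R : Type*} [CommRing R] [IsDomain R]
    {V : Type*} [Fintype V]
    (lam : V → ℕ) (α : V → V → R)
    (hdiag : ∀ p : V, α p p ≠ 0)
    (hvan : ∀ p q : V, q ≠ p → lam q ≤ lam p → α p q = 0)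
    (c : V → V → V → R)
    (hc : ∀ p q s : V, α p s * α q s = ∑ r : V, c p q r * α r s)
    (p q : V) (hpq : lam p ≤ lam q) :
    c p q q = α p q := by
  -- Step: a single inductive step, assuming vanishing for all r with smaller lam
  have step : ∀ s : V, lam s < lam q →
      (∀ r : V, lam r < lam s → c p q r = 0) → c p q s = 0 := by
    intro s hsq ih
    have hsnq : s ≠ q := fun h => absurd hsq (by rw [h]; exact lt_irrefl _)
    have hqs : α q s = 0 := hvan q s hsnq (le_of_lt hsq)
    have h := hc p q s
    rw [hqs, mul_zero] at h
    have hsum : ∑ r : V, c p q r * α r s = c p q s * α s s := by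
      apply Finset.sum_eq_single
      · intro r _ hr
        by_cases hlr : lam s ≤ lam r
        · rw [hvan r s (Ne.symm hr) hlr, mul_zero]
        · rw [ih r (lt_of_not_ge hlr), zero_mul]
      · intro hmem
        exact absurd (Finset.mem_univ s) hmem
    rw [hsum] at h
    rcases mul_eq_zero.mp h.symm with h1 | h2
    · exact h1
    · exact absurd h2 (hdiag s)
  -- key: c p q s = 0 for lam s < lam q, by induction on a bound for lam s
  have key : ∀ n : ℕ, ∀ s : V, lam s ≤ n → lam s < lam q → c p q s = 0 := by
    intro n
    induction n with
    | zero =>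
      intro s hs hsq
      exact step s hsq (fun r hr => absurd (lt_of_lt_of_le hr hs) (Nat.not_lt_zero _))
    | succ n ih =>
      intro s hs hsq
      exact step s hsq (fun r hr =>
        ih r (Nat.lt_succ_iff.mp (lt_of_lt_of_le hr hs)) (lt_trans hr hsq))
  -- Now evaluate at s = q
  have h := hc p q q
  have hsum : ∑ r : V, c p q r * α r q = c p q q * α q q := by
    apply Finset.sum_eq_single
    · intro r _ hr
      by_cases hlr : lam q ≤ lam r
      · rw [hvan r q (Ne.symm hr) hlr, mul_zero]
      · rw [key (lam r) r le_rfl (lt_of_not_ge hlr), zero_mul]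
    · intro hmem
      exact absurd (Finset.mem_univ q) hmem
  rw [hsum] at h
  exact mul_right_cancel₀ (hdiag q) h.symm
end

section
/- Let p, q, z ∈ V with λ p ≤ λ q and λ z = λ q + 1. Then (α z z) * (c p q z) = (α q z) * (α p z − α p q). (This is the paper's theorem c_{pq}^z = (α_q(z)/α_z(z)) · (α_p(z) − α_p(q)) for λ(z) = 1 + λ(q), cleared of the nonzero denominator α_z(z).) -/
theorem structure_constant_index_plus_one
    {R : Type*} [CommRing R] [IsDomain R]
    {V : Type*} [Fintype V]
    (lam : V → ℕ) (α : V → V → R)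
    (hdiag : ∀ p : V, α p p ≠ 0)
    (hvan : ∀ p q : V, q ≠ p → lam q ≤ lam p → α p q = 0)
    (c : V → V → V → R)
    (hc : ∀ p q s : V, α p s * α q s = ∑ r : V, c p q r * α r s)
    (p q z : V) (hpq : lam p ≤ lam q) (hz : lam z = lam q + 1) :
    α z z * c p q z = α q z * (α p z - α p q) := by
  classical
  -- Key: c p q r = 0 whenever r ≠ q and lam r ≤ lam q.
  have key : ∀ n : ℕ, ∀ r : V, lam r = n → r ≠ q → lam r ≤ lam q → c p q r = 0 := by
    intro n
    induction n using Nat.strong_induction_on with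
    | _ n ih =>
      intro r hrn hrq hrl
      have h := hc p q r
      rw [hvan q r hrq hrl, mul_zero] at h
      have hsum : ∑ r' : V, c p q r' * α r' r = c p q r * α r r := by
        apply Finset.sum_eq_single
        · intro b _ hb
          by_cases hbl : lam r ≤ lam b
          · rw [hvan b r (Ne.symm hb) hbl, mul_zero]
          · push_neg at hbl
            have hbq : b ≠ q := by
              intro hbq'; subst hbq'; exact absurd hrl (not_le.mpr hbl)
            rw [ih (lam b) (hrn ▸ hbl) b rfl hbq (le_of_lt (lt_of_lt_of_le hbl hrl)),
              zero_mul]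
        · intro hr; exact absurd (Finset.mem_univ r) hr
      rw [hsum] at h
      rcases mul_eq_zero.mp h.symm with h' | h'
      · exact h'
      · exact absurd h' (hdiag r)
  -- c p q q = α p q
  have hcq : c p q q = α p q := by
    have h := hc p q q
    have hsum : ∑ r' : V, c p q r' * α r' q = c p q q * α q q := by
      apply Finset.sum_eq_single
      · intro b _ hb
        by_cases hbl : lam q ≤ lam b
        · rw [hvan b q (Ne.symm hb) hbl, mul_zero]
        · push_neg at hbl
          rw [key (lam b) b rfl hb (le_of_lt hbl), zero_mul]
      · intro hr; exact absurd (Finset.mem_univ q) hr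
    rw [hsum] at h
    exact (mul_right_cancel₀ (hdiag q) h).symm
  -- evaluate at z
  have hqz : q ≠ z := by
    intro h; rw [← h] at hz; omega
  have h := hc p q z
  have hsum : ∑ r' : V, c p q r' * α r' z = c p q q * α q z + c p q z * α z z := by
    have : ∑ r' : V, c p q r' * α r' z
        = ∑ r' ∈ ({q, z} : Finset V), c p q r' * α r' z := by
      symm
      apply Finset.sum_subset (Finset.subset_univ _)
      intro b _ hb
      simp only [Finset.mem_insert, Finset.mem_singleton, not_or] at hb
      by_cases hbl : lam z ≤ lam b
      · rw [hvan b z (Ne.symm hb.2) hbl, mul_zero]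
      · push_neg at hbl
        have : lam b ≤ lam q := by omega
        rw [key (lam b) b rfl hb.1 this, zero_mul]
    rw [this, Finset.sum_pair hqz]
  rw [hsum, hcq] at h
  linear_combination -h
end

section
/- Let p, q, z ∈ V with λ p ≤ λ q and λ z = λ q + 1. If α q z = 0 (i.e., there is no edge from q to z in the moment graph), then c p q z = 0. (Paper's Remark 2.6.) -/
theorem structure_constant_no_edge_vanishes
    {R : Type*} [CommRing R] [IsDomain R]
    {V : Type*} [Fintype V]
    (lam : V → ℕ) (α : V → V → R)
    (hdiag : ∀ p : V, α p p ≠ 0)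
    (hvan : ∀ p q : V, q ≠ p → lam q ≤ lam p → α p q = 0)
    (c : V → V → V → R)
    (hc : ∀ p q s : V, α p s * α q s = ∑ r : V, c p q r * α r s)
    (p q z : V) (hpq : lam p ≤ lam q) (hz : lam z = lam q + 1)
    (hedge : α q z = 0) :
    c p q z = 0 := by
  -- key: for r ≠ q with lam r ≤ lam q, c p q r = 0
  have key : ∀ n : ℕ, ∀ r : V, lam r = n → r ≠ q → lam r ≤ lam q → c p q r = 0 := by
    intro n
    induction n using Nat.strong_induction_on with
    | _ n ih =>
      intro r hrn hrq hrlam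
      have h := hc p q r
      rw [hvan q r hrq hrlam, mul_zero] at h
      have hsum : (∑ t : V, c p q t * α t r) = c p q r * α r r := by
        apply Finset.sum_eq_single
        · intro t _ htr
          by_cases hle : lam r ≤ lam t
          · rw [hvan t r htr.symm hle, mul_zero]
          · push_neg at hle
            have htq : t ≠ q := by intro h'; subst h'; omega
            rw [ih (lam t) (by omega) t rfl htq (by omega), zero_mul]
        · intro h'; exact absurd (Finset.mem_univ r) h'
      rw [hsum] at h
      rcases mul_eq_zero.mp h.symm with h' | h'
      · exact h'
      · exact absurd h' (hdiag r)
  have h := hc p q z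
  rw [hedge, mul_zero] at h
  have hsum : (∑ r : V, c p q r * α r z) = c p q z * α z z := by
    apply Finset.sum_eq_single
    · intro r _ hrz
      by_cases hle : lam z ≤ lam r
      · rw [hvan r z hrz.symm hle, mul_zero]
      · push_neg at hle
        by_cases hrq : r = q
        · subst hrq; rw [hedge, mul_zero]
        · rw [key (lam r) r rfl hrq (by omega), zero_mul]
    · intro h'; exact absurd (Finset.mem_univ z) h'
  rw [hsum] at h
  rcases mul_eq_zero.mp h.symm with h' | h'
  · exact h'
  · exact absurd h' (hdiag z)
end

section
/- Let p, q, y ∈ V with λ p ≤ λ q and λ y = λ q + 2. Then (α y y) * (c p q y) = (α q y) * (α p y − α p q) − ∑_{z ∈ V_y^-} (α z y) * (c p q z). (This is the paper's theorem c_{pq}^y = ∑_{i=1}^{|V_y^-|} (α_{z_i}(y)/α_y(y)) · ((1/|V_y^-|) 𝔰_{z_i}^y c_{pq}^{z_i} − c_{pq}^{z_i}), where the shifting operator satisfies 𝔰_{z_i}^y c_{pq}^{z_i} = (α_q(y)/α_{z_i}(y)) · (α_p(y) − α_p(q)); substituting this value and clearing the nonzero denominator α_y(y) gives the stated identity, which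 is the paper's equation (18).) -/
/-- The set of in-neighbors `V_v^-` of `v` in the moment graph:
vertices `z` with `λ z + 1 = λ v` and `α z v ≠ 0`. -/
def inNbrs {R V : Type*} [CommRing R] [Fintype V] [DecidableEq R]
    (lam : V → ℕ) (α : V → V → R) (v : V) : Finset V :=
  Finset.univ.filter (fun z => lam z + 1 = lam v ∧ α z v ≠ 0)

theorem structure_constant_index_plus_two
    {R : Type*} [CommRing R] [IsDomain R] [DecidableEq R]
    {V : Type*} [Fintype V]
    (lam : V → ℕ) (α : V → V → R)
    (hdiag : ∀ p : V, α p p ≠ 0)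
    (hvan : ∀ p q : V, q ≠ p → lam q ≤ lam p → α p q = 0)
    (c : V → V → V → R)
    (hc : ∀ p q s : V, α p s * α q s = ∑ r : V, c p q r * α r s)
    (p q y : V) (hpq : lam p ≤ lam q) (hy : lam y = lam q + 2) :
    α y y * c p q y
      = α q y * (α p y - α p q) - ∑ z ∈ inNbrs lam α y, α z y * c p q z := by
  classical
  -- Step 1: c p q s = 0 for s with lam s ≤ lam q and s ≠ q
  have hzero : ∀ n s, lam s = n → lam s ≤ lam q → s ≠ q → c p q s = 0 := by
    intro n
    induction n using Nat.strong_induction_on with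
    | _ n ih =>
      intro s hs hle hne
      have h := hc p q s
      rw [hvan q s hne hle, mul_zero] at h
      have hsum : ∑ r : V, c p q r * α r s = c p q s * α s s := by
        refine Finset.sum_eq_single s ?_ (by simp)
        intro r _ hrs
        by_cases hlr : lam s ≤ lam r
        · rw [hvan r s (Ne.symm hrs), mul_zero]; exact hlr
        · push_neg at hlr
          have hrq : r ≠ q := by intro h'; subst h'; omega
          rw [ih (lam r) (by omega) r rfl (by omega) hrq, zero_mul]
      rw [hsum] at h
      exact (mul_eq_zero.mp h.symm).resolve_right (hdiag s)
  -- Step 2: c p q q = α p q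
  have hq : c p q q = α p q := by
    have h := hc p q q
    have hsum : ∑ r : V, c p q r * α r q = c p q q * α q q := by
      refine Finset.sum_eq_single q ?_ (by simp)
      intro r _ hrq
      by_cases hlr : lam q ≤ lam r
      · rw [hvan r q (Ne.symm hrq) hlr, mul_zero]
      · push_neg at hlr
        rw [hzero (lam r) r rfl (by omega) hrq, zero_mul]
    rw [hsum] at h
    exact (mul_right_cancel₀ (hdiag q) h).symm
  -- Step 3: evaluate hc at y
  have h := hc p q y
  have hyq : y ≠ q := by intro h'; subst h'; omega
  have hynin : y ∉ inNbrs lam α y := by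
    simp only [inNbrs, Finset.mem_filter]; omega
  have hqnin : q ∉ inNbrs lam α y := by
    simp only [inNbrs, Finset.mem_filter]; omega
  have hqni : q ∉ insert y (inNbrs lam α y) := by
    simp [hynin, hqnin, Ne.symm hyq]
  set S : Finset V := insert q (insert y (inNbrs lam α y)) with hS
  have hsum : ∑ r : V, c p q r * α r y
      = c p q q * α q y + (c p q y * α y y + ∑ z ∈ inNbrs lam α y, c p q z * α z y) := by
    have hsub : ∑ r : V, c p q r * α r y = ∑ r ∈ S, c p q r * α r y := by
      refine (Finset.sum_subset (Finset.subset_univ S) ?_).symm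
      intro r _ hrS
      simp only [hS, Finset.mem_insert] at hrS
      push_neg at hrS
      obtain ⟨hrq, hry, hrn⟩ := hrS
      by_cases hlr : lam y ≤ lam r
      · rw [hvan r y (Ne.symm hry) hlr, mul_zero]
      · by_cases hlr2 : lam r + 1 = lam y
        · have : α r y = 0 := by
            by_contra hne
            exact hrn (by simp [inNbrs, hlr2, hne])
          rw [this, mul_zero]
        · rw [hzero (lam r) r rfl (by omega) hrq, zero_mul]
    rw [hsub, hS, Finset.sum_insert hqni, Finset.sum_insert hynin]
  rw [hsum, hq] at h
  have hcomm : ∑ z ∈ inNbrs lam α y, α z y * c p q z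
      = ∑ z ∈ inNbrs lam α y, c p q z * α z y :=
    Finset.sum_congr rfl (fun z _ => mul_comm _ _)
  rw [hcomm]
  linear_combination -h
end

section
/- Let p, q, y ∈ V with λ p ≤ λ q and λ y = λ q + 2. Suppose there is no path from q to y in the moment graph, i.e., α q y = 0 and for every z ∈ V with λ z = λ q + 1 one has α q z = 0 or α z y = 0. Then c p q y = 0. (Paper's Remark 2.10: c_{pq}^y = 0 if the set of paths Σ_q^y is empty.) -/
theorem structure_constant_no_path_vanishes
    {R : Type*} [CommRing R] [IsDomain R]
    {V : Type*} [Fintype V]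
    (lam : V → ℕ) (α : V → V → R)
    (hdiag : ∀ p : V, α p p ≠ 0)
    (hvan : ∀ p q : V, q ≠ p → lam q ≤ lam p → α p q = 0)
    (c : V → V → V → R)
    (hc : ∀ p q s : V, α p s * α q s = ∑ r : V, c p q r * α r s)
    (p q y : V) (hpq : lam p ≤ lam q) (hy : lam y = lam q + 2)
    (hqy : α q y = 0)
    (hnopath : ∀ z : V, lam z = lam q + 1 → α q z = 0 ∨ α z y = 0) :
    c p q y = 0 := by
  have key : ∀ s : V, lam s ≤ lam q → s ≠ q → c p q s = 0 := by
    have H : ∀ n : ℕ, ∀ s : V, lam s = n → lam s ≤ lam q → s ≠ q → c p q s = 0 := by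
      intro n
      induction n using Nat.strong_induction_on with
      | _ n ih =>
        intro s hsn hsle hsne
        have h := hc p q s
        rw [hvan q s hsne hsle, mul_zero] at h
        have hsum : (∑ r : V, c p q r * α r s) = c p q s * α s s := by
          apply Finset.sum_eq_single
          · intro r _ hrs
            rcases le_or_gt (lam s) (lam r) with hle | hlt
            · rw [hvan r s (Ne.symm hrs) hle, mul_zero]
            · have hrq : r ≠ q := by intro he; subst he; omega
              rw [ih (lam r) (by omega) r rfl (by omega) hrq, zero_mul]
          · intro hs; exact absurd (Finset.mem_univ s) hs
        rw [hsum] at h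
        rcases mul_eq_zero.mp h.symm with h0 | h0
        · exact h0
        · exact absurd h0 (hdiag s)
    intro s; exact H (lam s) s rfl
  have level : ∀ z : V, lam z = lam q + 1 → α q z = 0 → c p q z = 0 := by
    intro z hz hqz
    have h := hc p q z
    rw [hqz, mul_zero] at h
    have hsum : (∑ r : V, c p q r * α r z) = c p q z * α z z := by
      apply Finset.sum_eq_single
      · intro r _ hrz
        rcases le_or_gt (lam z) (lam r) with hle | hlt
        · rw [hvan r z (Ne.symm hrz) hle, mul_zero]
        · by_cases hrq : r = q
          · subst hrq; rw [hqz, mul_zero]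
          · rw [key r (by omega) hrq, zero_mul]
      · intro hs; exact absurd (Finset.mem_univ z) hs
    rw [hsum] at h
    rcases mul_eq_zero.mp h.symm with h0 | h0
    · exact h0
    · exact absurd h0 (hdiag z)
  have h := hc p q y
  rw [hqy, mul_zero] at h
  have hsum : (∑ r : V, c p q r * α r y) = c p q y * α y y := by
    apply Finset.sum_eq_single
    · intro r _ hry
      rcases le_or_gt (lam y) (lam r) with hle | hlt
      · rw [hvan r y (Ne.symm hry) hle, mul_zero]
      · by_cases hr1 : lam r = lam q + 1
        · rcases hnopath r hr1 with h0 | h0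
          · rw [level r hr1 h0, zero_mul]
          · rw [h0, mul_zero]
        · by_cases hrq : r = q
          · subst hrq; rw [hqy, mul_zero]
          · rw [key r (by omega) hrq, zero_mul]
    · intro hs; exact absurd (Finset.mem_univ y) hs
  rw [hsum] at h
  rcases mul_eq_zero.mp h.symm with h0 | h0
  · exact h0
  · exact absurd h0 (hdiag y)
end

section
/- Let p, q, x ∈ V with λ p ≤ λ q and λ x = λ q + 3. Then (α x x) * (c p q x) = (α q x) * (α p x − α p q) − ∑_{z ∈ V, λ z = λ q + 1} (α z x) * (c p q z) − ∑_{y ∈ V_x^-} (α y x) * (c p q y). (This is the paper's equation (23), the localization of the structure-constant equation at x, cleared of the nonzero denominator α_x(x); the first sum may equivalently be restricted to z ∈ V_q^+, since c_{pq}^z = 0 for z of index λ(q)+1 outside V_q^+.) -/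
theorem structure_constant_index_plus_three_localization
    {R : Type*} [CommRing R] [IsDomain R] [DecidableEq R]
    {V : Type*} [Fintype V]
    (lam : V → ℕ) (α : V → V → R)
    (hdiag : ∀ p : V, α p p ≠ 0)
    (hvan : ∀ p q : V, q ≠ p → lam q ≤ lam p → α p q = 0)
    (c : V → V → V → R)
    (hc : ∀ p q s : V, α p s * α q s = ∑ r : V, c p q r * α r s)
    (p q x : V) (hpq : lam p ≤ lam q) (hx : lam x = lam q + 3) :
    α x x * c p q x
      = α q x * (α p x - α p q)
        - ∑ z ∈ Finset.univ.filter (fun z => lam z = lam q + 1), α z x * c p q z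
        - ∑ y ∈ inNbrs lam α x, α y x * c p q y := by
  classical
  -- c p q s = 0 for lam s < lam q
  have clow : ∀ n, ∀ s : V, lam s = n → lam s < lam q → c p q s = 0 := by
    intro n
    induction n using Nat.strong_induction_on with
    | _ n ih =>
      intro s hsn hs
      have hq0 : α q s = 0 := hvan q s (by rintro rfl; omega) (le_of_lt hs)
      have hsum : ∑ r : V, c p q r * α r s = c p q s * α s s := by
        rw [← Finset.sum_subset (Finset.subset_univ ({s} : Finset V))]
        · simp
        · intro r _ hr
          simp only [Finset.mem_singleton] at hr
          rcases lt_or_ge (lam r) (lam s) with h | h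
          · rw [ih (lam r) (by omega) r rfl (by omega), zero_mul]
          · rw [hvan r s (fun h' => hr h'.symm) h, mul_zero]
      have h0 : c p q s * α s s = 0 := by
        rw [← hsum, ← hc, hq0, mul_zero]
      rcases mul_eq_zero.mp h0 with h | h
      · exact h
      · exact absurd h (hdiag s)
  -- c p q s = 0 for lam s = lam q, s ≠ q
  have ceq : ∀ s : V, lam s = lam q → s ≠ q → c p q s = 0 := by
    intro s hsq hne
    have hq0 : α q s = 0 := hvan q s hne (le_of_eq hsq)
    have hsum : ∑ r : V, c p q r * α r s = c p q s * α s s := by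
      rw [← Finset.sum_subset (Finset.subset_univ ({s} : Finset V))]
      · simp
      · intro r _ hr
        simp only [Finset.mem_singleton] at hr
        rcases lt_or_ge (lam r) (lam s) with h | h
        · rw [clow (lam r) r rfl (by omega), zero_mul]
        · rw [hvan r s (fun h' => hr h'.symm) h, mul_zero]
    have h0 : c p q s * α s s = 0 := by
      rw [← hsum, ← hc, hq0, mul_zero]
    rcases mul_eq_zero.mp h0 with h | h
    · exact h
    · exact absurd h (hdiag s)
  -- c p q q = α p q
  have cq : c p q q = α p q := by
    have hsum : ∑ r : V, c p q r * α r q = c p q q * α q q := by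
      rw [← Finset.sum_subset (Finset.subset_univ ({q} : Finset V))]
      · simp
      · intro r _ hr
        simp only [Finset.mem_singleton] at hr
        rcases lt_or_ge (lam r) (lam q) with h | h
        · rw [clow (lam r) r rfl h, zero_mul]
        · rw [hvan r q (fun h' => hr h'.symm) h, mul_zero]
    have h0 : α p q * α q q = c p q q * α q q := by rw [hc, hsum]
    exact (mul_right_cancel₀ (hdiag q) h0.symm)
  -- the partition sets
  set S1 : Finset V := Finset.univ.filter (fun z => lam z = lam q + 1) with hS1
  set S2 : Finset V := inNbrs lam α x with hS2
  have memS2 : ∀ y, y ∈ S2 ↔ lam y + 1 = lam x ∧ α y x ≠ 0 := by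
    intro y; simp [hS2, inNbrs]
  have memS1 : ∀ z, z ∈ S1 ↔ lam z = lam q + 1 := by
    intro z; simp [hS1]
  have hxq : x ≠ q := by intro h; rw [h] at hx; omega
  -- disjointness
  have d1 : Disjoint ({x} : Finset V) ({q} : Finset V) := by
    simp [Finset.disjoint_left, hxq]
  have d2 : Disjoint (({x} : Finset V) ∪ {q}) S1 := by
    rw [Finset.disjoint_left]
    intro a ha ha1
    rw [memS1] at ha1
    simp only [Finset.mem_union, Finset.mem_singleton] at ha
    rcases ha with rfl | rfl <;> omega
  have d3 : Disjoint ((({x} : Finset V) ∪ {q}) ∪ S1) S2 := by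
    rw [Finset.disjoint_left]
    intro a ha ha2
    rw [memS2] at ha2
    simp only [Finset.mem_union, Finset.mem_singleton, memS1] at ha
    rcases ha with (rfl | rfl) | h <;> omega
  set A : Finset V := (({x} : Finset V) ∪ {q}) ∪ S1 ∪ S2 with hA
  have hvanish : ∀ r ∈ (Finset.univ : Finset V), r ∉ A → c p q r * α r x = 0 := by
    intro r _ hr
    simp only [hA, Finset.mem_union, Finset.mem_singleton, memS1, memS2, not_or] at hr
    obtain ⟨⟨⟨hrx, hrq⟩, hr1⟩, hr2⟩ := hr
    rcases lt_or_ge (lam r) (lam q) with h | h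
    · rw [clow (lam r) r rfl h, zero_mul]
    rcases eq_or_lt_of_le h with h' | h'
    · rw [ceq r h'.symm hrq, zero_mul]
    rcases Nat.lt_or_ge (lam r) (lam q + 3) with h'' | h''
    · -- lam r = lam q + 2 (since ≠ lam q + 1)
      have : lam r + 1 = lam x := by omega
      have : α r x = 0 := by
        by_contra hne
        exact hr2 ⟨this, hne⟩
      rw [this, mul_zero]
    · rw [hvan r x (fun h0 => hrx h0.symm) (by omega), mul_zero]
  have hsplit : ∑ r : V, c p q r * α r x =
      c p q x * α x x + c p q q * α q x
        + ∑ z ∈ S1, c p q z * α z x + ∑ y ∈ S2, c p q y * α y x := by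
    rw [← Finset.sum_subset (Finset.subset_univ A) hvanish, hA,
      Finset.sum_union d3, Finset.sum_union d2, Finset.sum_union d1]
    simp [add_assoc]
  have hmain := hc p q x
  rw [hsplit, cq] at hmain
  have e1 : ∑ z ∈ Finset.univ.filter (fun z => lam z = lam q + 1), α z x * c p q z
      = ∑ z ∈ S1, c p q z * α z x := by
    rw [hS1]; exact Finset.sum_congr rfl (fun z _ => mul_comm _ _)
  have e2 : ∑ y ∈ inNbrs lam α x, α y x * c p q y = ∑ y ∈ S2, c p q y * α y x := by
    rw [hS2]; exact Finset.sum_congr rfl (fun y _ => mul_comm _ _)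
  rw [e1, e2]
  linear_combination -hmain
end

section
/- For every i, j ∈ Fin (n+1) with i ≤ j there exists c : Fin (n+1) → R such that, for all k ∈ Fin (n+1), A i k * A j k = ∑_{r ∈ Fin (n+1)} (c r) * (A r k). (Existence of the equivariant structure constants c_{p_i p_j}^{p_k} for H_T^*(ℂP^n) with respect to the canonical classes of the paper's Section 3: the pointwise product of the localized canonical classes lies in the R-span of the localized canonical classes.) -/
/-!
The localized canonical class `A i` is the vector of values at the nodes `t_0, …, t_n` of the
Newton polynomial `∏_{j<i} (t_j - x)`. Multiplying it by `t_j - x` gives `(t_j - t_i) A i`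
plus `∏_{j≤i} (t_j - x)`, which is `A (i+1)`, or vanishes at every node when `i = n`. Hence the
`R`-span of the `A r` is stable under multiplication by each `t_j - x`, so under multiplication
by every `A i`, and in particular contains `A i * A j`.
-/

open MvPolynomial Finset

namespace Newton

variable {R : Type*} [CommRing R] {m : ℕ} (t : Fin m → R)

def basis (i : Fin m) : Fin m → R := fun k => ∏ j ∈ Iio i, (t j - t k)

def span : Submodule R (Fin m → R) := Submodule.span R (Set.range (basis t))

theorem basis_eq_ite (i k : Fin m) :
    basis t i k = if i ≤ k then ∏ j ∈ Iio i, (t j - t k) else 0 := by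
  split_ifs with h
  · rfl
  · exact prod_eq_zero (mem_Iio.2 (not_le.1 h)) (sub_self _)

theorem basis_eq_prod (i : Fin m) : basis t i = ∏ j ∈ Iio i, fun k => t j - t k := by
  ext k
  rw [basis, prod_apply]

theorem basis_mem_span (i : Fin m) : basis t i ∈ span t :=
  Submodule.subset_span ⟨i, rfl⟩

theorem sub_mul_basis_self_mem_span (r : Fin m) :
    (fun k => t r - t k) * basis t r ∈ span t := by
  have hIic : (fun k => t r - t k) * basis t r = fun k => ∏ j ∈ Iic r, (t j - t k) := by
    ext k
    rw [Pi.mul_apply, basis, ← Iio_insert, prod_insert notMem_Iio_self]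
  rw [hIic]
  by_cases hr : (r : ℕ) + 1 < m
  · convert basis_mem_span t ⟨r + 1, hr⟩ using 1
    ext k
    congr 1
    ext j
    simp only [mem_Iic, mem_Iio, Fin.le_def, Fin.lt_def]
    omega
  · -- `r` is the last node, so every `t_k` is a root of `∏_{j≤r} (t_j - x)`.
    convert (span t).zero_mem using 1
    ext k
    exact prod_eq_zero (mem_Iic.2 (Fin.le_def.2 (by omega))) (sub_self _)

theorem sub_mul_mem_span (j : Fin m) {v : Fin m → R} (hv : v ∈ span t) :
    (fun k => t j - t k) * v ∈ span t := by
  induction hv using Submodule.span_induction with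
  | mem v hv =>
    obtain ⟨r, rfl⟩ := hv
    have hsplit : (fun k => t j - t k) * basis t r =
        (t j - t r) • basis t r + (fun k => t r - t k) * basis t r := by
      ext k
      simp only [Pi.add_apply, Pi.mul_apply, Pi.smul_apply, smul_eq_mul]
      ring
    rw [hsplit]
    exact add_mem (Submodule.smul_mem _ _ (basis_mem_span t r)) (sub_mul_basis_self_mem_span t r)
  | zero => simp
  | add v w _ _ hv hw => simpa only [mul_add] using add_mem hv hw
  | smul a v _ hv => simpa only [mul_smul_comm] using Submodule.smul_mem _ a hv

theorem basis_mul_mem_span (i : Fin m) {v : Fin m → R} (hv : v ∈ span t) :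
    basis t i * v ∈ span t := by
  rw [basis_eq_prod]
  refine prod_induction _ (fun w => ∀ v ∈ span t, w * v ∈ span t) ?_ ?_ ?_ v hv
  · intro w w' hw hw' v hv
    simpa only [mul_assoc] using hw _ (hw' v hv)
  · simpa only [one_mul] using fun v hv => hv
  · exact fun j _ v hv => sub_mul_mem_span t j hv

end Newton

theorem cpn_structure_constants_exist_general
    (n : ℕ)
    (A : Fin (n + 1) → Fin (n + 1) → MvPolynomial (Fin (n + 1)) ℚ)
    (hA : ∀ i k : Fin (n + 1),
      A i k = if i ≤ k then ∏ j ∈ Finset.Iio i, (X j - X k) else 0)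
    (i j : Fin (n + 1)) :
    ∃ c : Fin (n + 1) → MvPolynomial (Fin (n + 1)) ℚ,
      ∀ k : Fin (n + 1), A i k * A j k = ∑ r : Fin (n + 1), c r * A r k := by
  obtain rfl : A = Newton.basis X := funext₂ fun i k => by rw [hA, Newton.basis_eq_ite]
  obtain ⟨c, hc⟩ := (Submodule.mem_span_range_iff_exists_fun _).1
    (Newton.basis_mul_mem_span (X (R := ℚ)) i (Newton.basis_mem_span _ j))
  exact ⟨c, fun k => by simpa using (congrFun hc k).symm⟩

theorem cpn_structure_constants_exist
    (n : ℕ) (hn : 1 ≤ n)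
    (A : Fin (n + 1) → Fin (n + 1) → MvPolynomial (Fin (n + 1)) ℚ)
    (hA : ∀ i k : Fin (n + 1),
      A i k = if i ≤ k then ∏ j ∈ Finset.Iio i, (X j - X k) else 0)
    (i j : Fin (n + 1)) (hij : i ≤ j) :
    ∃ c : Fin (n + 1) → MvPolynomial (Fin (n + 1)) ℚ,
      ∀ k : Fin (n + 1), A i k * A j k = ∑ r : Fin (n + 1), c r * A r k :=
  cpn_structure_constants_exist_general n A hA i j
end

section
/- Let i, j ∈ Fin (n+1) with i ≤ j, and suppose c : Fin (n+1) → R satisfies A i k * A j k = ∑_{r ∈ Fin (n+1)} (c r) * (A r k) for all k ∈ Fin (n+1). Then for every k with j < k ≤ n: (t_{k-1} − t_k) * (c k) = σ_k (c (k-1)) − c (k-1), where σ_k : R → R is the ℚ-algebra endomorphism of R determined by σ_k(t_{k-1}) = t_k and σ_k(t_m) = t_m for m ≠ k−1. (This is the paper's equation (31), c_{p_i p_j}^{p_k} = (𝔰_{p_{k-1}}^{p_k} c_{p_i p_j}^{p_{k-1}} − c_{p_i p_j}^{p_{k-1}})/(t_{k-1} − t_k), i.e., c_{p_i p_j}^{p_k}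 = ∂_{k-1} c_{p_i p_j}^{p_{k-1}} for the divided difference operator, recovering Tymoczko's Theorem 4.1 as a special case of the paper's results.) -/
/-!
Let `σ` substitute `t_k` for `t_{k-1}`. The structure constants are the coordinates of
`α_{p_i} α_{p_j}` in the triangular system `(α_{p_r}(p_m))_{r ≤ m}`, whose diagonal entries are
nonzero. Since `σ` fixes every `α_{p_r}(p_m)` with `m < k - 1`, it fixes `c r` for `r < k - 1` by
induction on `r`. At `p_{k-1}` it carries `α_{p_r}(p_{k-1})` to `α_{p_r}(p_k)` for `r ≤ k - 1`, so
comparing the image of the relation at `p_{k-1}` with the relation at `p_k` leaves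
`(σ c_{k-1} - c_{k-1}) α_{p_{k-1}}(p_k) = c_k α_{p_k}(p_k)`, and
`α_{p_k}(p_k) = (t_{k-1} - t_k) α_{p_{k-1}}(p_k)`.
-/

open MvPolynomial Finset

namespace CPn

variable {R ι : Type*} [CommRing R] [LinearOrder ι] [LocallyFiniteOrderBot ι]

/-- `canonicalClass R i k` is `α_{p_i}(p_k)`. -/
noncomputable def canonicalClass (R : Type*) [CommRing R] (i k : ι) : MvPolynomial ι R :=
  if i ≤ k then ∏ j ∈ Iio i, (X j - X k) else 0

theorem canonicalClass_of_lt {i k : ι} (h : k < i) : canonicalClass R i k = 0 :=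
  if_neg h.not_ge

theorem canonicalClass_ne_zero [IsDomain R] {i k : ι} (h : i ≤ k) :
    canonicalClass R i k ≠ 0 := by
  rw [canonicalClass, if_pos h, prod_ne_zero_iff]
  intro j hj
  exact sub_ne_zero.mpr ((X_injective (σ := ι) (R := R)).ne (mem_Iio.mp hj |>.trans_le h).ne)

theorem canonicalClass_self_of_covBy {k k' : ι} (h : k ⋖ k') :
    canonicalClass R k' k' = (X k - X k') * canonicalClass R k k' := by
  classical
  have hIio : Iio k' = insert k (Iio k) := by
    rw [Iio_insert]
    exact coe_injective (by simpa using h.Iio_eq)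
  rw [canonicalClass, canonicalClass, if_pos le_rfl, if_pos h.le, hIio,
    prod_insert (by simp)]

theorem aeval_canonicalClass_of_forall_le {f : ι → MvPolynomial ι R} {m : ι}
    (hf : ∀ x ≤ m, f x = X x) (r : ι) :
    aeval f (canonicalClass R r m) = canonicalClass R r m := by
  unfold canonicalClass
  split_ifs with hrm
  · rw [map_prod]
    refine prod_congr rfl fun x hx => ?_
    rw [map_sub, aeval_X, aeval_X, hf x ((mem_Iio.mp hx).le.trans hrm), hf m le_rfl]
  · exact map_zero _

theorem aeval_canonicalClass_of_le {f : ι → MvPolynomial ι R} {r k k' : ι}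
    (hrk : r ≤ k) (hkk' : k ≤ k') (hf : ∀ x < r, f x = X x) (hfk : f k = X k') :
    aeval f (canonicalClass R r k) = canonicalClass R r k' := by
  rw [canonicalClass, canonicalClass, if_pos hrk, if_pos (hrk.trans hkk'), map_prod]
  refine prod_congr rfl fun x hx => ?_
  rw [map_sub, aeval_X, aeval_X, hf x (mem_Iio.mp hx), hfk]

variable [Fintype ι] [IsDomain R]

theorem eq_zero_of_sum_mul_canonicalClass_eq_zero {d : ι → MvPolynomial ι R} {k : ι}
    (hd : ∀ m < k, ∑ s, d s * canonicalClass R s m = 0) : ∀ r < k, d r = 0 := by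
  intro r
  induction r using WellFoundedLT.induction with
  | ind r ih =>
    intro hrk
    have hsum : ∑ s, d s * canonicalClass R s r = d r * canonicalClass R r r := by
      refine sum_eq_single r (fun s _ hsr => ?_) (by simp)
      rcases hsr.lt_or_gt with hsr | hsr
      · rw [ih s hsr (hsr.trans hrk), zero_mul]
      · rw [canonicalClass_of_lt hsr, mul_zero]
    have hr := hd r hrk
    rw [hsum] at hr
    exact (mul_eq_zero.mp hr).resolve_right (canonicalClass_ne_zero le_rfl)

variable {i j : ι} {c f : ι → MvPolynomial ι R}

theorem aeval_structureConst_of_lt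
    (hc : ∀ m, canonicalClass R i m * canonicalClass R j m = ∑ s, c s * canonicalClass R s m)
    {k : ι} (hf : ∀ x < k, f x = X x) : ∀ r < k, aeval f (c r) = c r := by
  have hd := eq_zero_of_sum_mul_canonicalClass_eq_zero (d := fun r => aeval f (c r) - c r)
    (k := k) fun m hmk => by
      have hfm : ∀ x ≤ m, f x = X x := fun x hx => hf x (hx.trans_lt hmk)
      have hσ := congrArg (aeval f) (hc m)
      simp only [map_mul, map_sum, aeval_canonicalClass_of_forall_le hfm] at hσ
      simp only [sub_mul, sum_sub_distrib, ← hσ, hc m, sub_self]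
  exact fun r hr => sub_eq_zero.mp (hd r hr)

theorem sub_mul_structureConst_of_covBy
    (hc : ∀ m, canonicalClass R i m * canonicalClass R j m = ∑ s, c s * canonicalClass R s m)
    (hij : i ≤ j) {k k' : ι} (hkk' : k ⋖ k') (hjk' : j < k')
    (hf : ∀ x < k, f x = X x) (hfk : f k = X k') :
    (X k - X k') * c k' = aeval f (c k) - c k := by
  have hjk := hkk'.le_of_lt hjk'
  have hfix := aeval_structureConst_of_lt hc hf
  have hσ : ∀ r ≤ k, aeval f (canonicalClass R r k) = canonicalClass R r k' := fun r hr =>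
    aeval_canonicalClass_of_le hr hkk'.le (fun x hx => hf x (hx.trans_le hr)) hfk
  have hk := congrArg (aeval f) (hc k)
  rw [map_mul, hσ i (hij.trans hjk), hσ j hjk, hc k', map_sum] at hk
  have hterm : ∀ s, s ≠ k ∧ s ≠ k' →
      aeval f (c s * canonicalClass R s k) = c s * canonicalClass R s k' := by
    rintro s ⟨hsk, hsk'⟩
    rcases hsk.lt_or_gt with hsk | hsk
    · rw [map_mul, hfix s hsk, hσ s hsk.le]
    · have hks : k' < s := (hkk'.ge_of_gt hsk).lt_of_ne hsk'.symm
      rw [canonicalClass_of_lt hsk, canonicalClass_of_lt hks, mul_zero, map_zero]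
  have hdiff : ∑ s, (aeval f (c s * canonicalClass R s k) - c s * canonicalClass R s k') =
      (aeval f (c k) - c k) * canonicalClass R k k' - c k' * canonicalClass R k' k' := by
    rw [Fintype.sum_eq_add k k' hkk'.ne fun s hs => sub_eq_zero.mpr (hterm s hs), map_mul,
      hσ k le_rfl, map_mul, canonicalClass_of_lt hkk'.lt, map_zero, mul_zero]
    ring
  rw [sum_sub_distrib, ← hk, sub_self, canonicalClass_self_of_covBy hkk'] at hdiff
  refine mul_right_cancel₀ (canonicalClass_ne_zero (R := R) hkk'.le) ?_
  linear_combination hdiff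

end CPn

theorem cpn_structure_constants_divided_difference_general
    (n : ℕ)
    (A : Fin (n + 1) → Fin (n + 1) → MvPolynomial (Fin (n + 1)) ℚ)
    (hA : ∀ i k : Fin (n + 1),
      A i k = if i ≤ k then ∏ j ∈ Finset.Iio i, (X j - X k) else 0)
    (i j : Fin (n + 1)) (hij : i ≤ j)
    (c : Fin (n + 1) → MvPolynomial (Fin (n + 1)) ℚ)
    (hc : ∀ k : Fin (n + 1), A i k * A j k = ∑ r : Fin (n + 1), c r * A r k)
    -- `k'` is the fixed point `p_k` with `j < k ≤ n`, and `k` is `p_{k-1}`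
    (k k' : Fin (n + 1)) (hjk : j < k') (hkk' : (k' : ℕ) = (k : ℕ) + 1) :
    (X k - X k') * c k'
      = (aeval (fun m : Fin (n + 1) => if m = k then X k' else X m)) (c k)
        - c k := by
  obtain rfl : A = CPn.canonicalClass ℚ := funext₂ hA
  have hcov : k ⋖ k' :=
    ⟨Fin.lt_def.mpr (by omega), fun _ h₁ h₂ => by rw [Fin.lt_def] at h₁ h₂; omega⟩
  exact CPn.sub_mul_structureConst_of_covBy hc hij hcov hjk
    (fun x hx => if_neg hx.ne) (if_pos rfl)

theorem cpn_structure_constants_divided_difference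
    (n : ℕ) (hn : 1 ≤ n)
    (A : Fin (n + 1) → Fin (n + 1) → MvPolynomial (Fin (n + 1)) ℚ)
    (hA : ∀ i k : Fin (n + 1),
      A i k = if i ≤ k then ∏ j ∈ Finset.Iio i, (X j - X k) else 0)
    (i j : Fin (n + 1)) (hij : i ≤ j)
    (c : Fin (n + 1) → MvPolynomial (Fin (n + 1)) ℚ)
    (hc : ∀ k : Fin (n + 1), A i k * A j k = ∑ r : Fin (n + 1), c r * A r k)
    -- `k'` is the fixed point `p_k` with `j < k ≤ n`, and `k` is `p_{k-1}`
    (k k' : Fin (n + 1)) (hjk : j < k') (hkk' : (k' : ℕ) = (k : ℕ) + 1) :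
    (X k - X k') * c k'
      = (aeval (fun m : Fin (n + 1) => if m = k then X k' else X m)) (c k)
        - c k :=
  cpn_structure_constants_divided_difference_general n A hA i j hij c hc k k' hjk hkk'
end
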